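/- Over a field (or commutative ring) K of prime characteristic p, the p-fold shuffle power of any formal power series A ∈ K[[X]] equals the constant series (A,1)^p, i.e. A^{⧢p} = α₀^p where α₀ is the constant coefficient of A. In particular, every element of 1 + X·K[[X]] has order dividing p in the shuffle group. -/

import Mathlib

open PowerSeries

/-- The shuffle product of formal power series. -/
noncomputable def shuffle {K : Type*} [CommRing K] (A B : PowerSeries K) : PowerSeries K :=
  PowerSeries.mk fun n => ∑ k ∈ Finset.range (n + 1),
    (n.choose k : K) * (coeff k A) * (coeff (n - k) B)

/-- Iterated shuffle powers. -/
noncomputable def shufflePow {K : Type*} [CommRing K] (A : PowerSeries K) : ℕ → PowerSeries K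
  | 0 => 1
  | n + 1 => shuffle A (shufflePow A n)

/-!
The shift `hurwitzDeriv A = ∑ₙ aₙ₊₁ Xⁿ` is a derivation for the shuffle product (this is Pascal's
rule), and a series is constant as soon as its shift vanishes. Hence
`hurwitzDeriv (A^{⧢p}) = p • (hurwitzDeriv A ⧢ A^{⧢(p-1)}) = 0` in characteristic `p`, so `A^{⧢p}`
is the constant series `α₀^p`.
-/

open Finset

namespace PowerSeries

variable {K : Type*} [CommRing K]

theorem coeff_shuffle (A B : K⟦X⟧) (n : ℕ) :
    coeff n (shuffle A B) =
      ∑ ij ∈ antidiagonal n, (n.choose ij.1 : K) * coeff ij.1 A * coeff ij.2 B := by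
  rw [shuffle, coeff_mk,
    Nat.sum_antidiagonal_eq_sum_range_succ fun i j => (n.choose i : K) * coeff i A * coeff j B]

theorem constantCoeff_shuffle (A B : K⟦X⟧) :
    constantCoeff (shuffle A B) = constantCoeff A * constantCoeff B := by
  rw [← coeff_zero_eq_constantCoeff_apply, coeff_shuffle]
  simp

theorem shuffle_one (A : K⟦X⟧) : shuffle A 1 = A := by
  ext n
  rw [coeff_shuffle, Nat.sum_antidiagonal_eq_sum_range_succ_mk, sum_range_succ,
    sum_eq_zero fun k hk => ?_]
  · simp
  · rw [coeff_one, if_neg (by simp at hk; omega), mul_zero]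

theorem shuffle_smul (c : K) (A B : K⟦X⟧) : shuffle A (c • B) = c • shuffle A B := by
  ext n
  simp only [coeff_shuffle, map_smul, smul_eq_mul, mul_sum]
  exact sum_congr rfl fun _ _ => by ring

theorem shuffle_add (A B C : K⟦X⟧) : shuffle A (B + C) = shuffle A B + shuffle A C := by
  ext n
  simp only [coeff_shuffle, map_add, mul_add, sum_add_distrib]

noncomputable def hurwitzDeriv (A : K⟦X⟧) : K⟦X⟧ :=
  mk fun n => coeff (n + 1) A

@[simp]
theorem coeff_hurwitzDeriv (A : K⟦X⟧) (n : ℕ) : coeff n (hurwitzDeriv A) = coeff (n + 1) A :=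
  coeff_mk _ _

theorem hurwitzDeriv_shuffle (A B : K⟦X⟧) :
    hurwitzDeriv (shuffle A B) = shuffle (hurwitzDeriv A) B + shuffle A (hurwitzDeriv B) := by
  ext n
  simp only [coeff_hurwitzDeriv, map_add, coeff_shuffle, mul_assoc]
  rw [sum_antidiagonal_choose_succ_mul fun i j => coeff i A * coeff j B, add_comm]
  congr 1
  refine sum_congr rfl fun ij hij => ?_
  rw [Nat.choose_symm_of_eq_add (mem_antidiagonal.1 hij).symm]

/-- Induction on the degree: both sides have the same constant coefficient, and by the Leibniz
rule their shifts are sums of the same three terms of the same shape. -/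
theorem shuffle_left_comm (A B C : K⟦X⟧) :
    shuffle A (shuffle B C) = shuffle B (shuffle A C) := by
  ext n
  induction n generalizing A B C with
  | zero =>
    simp only [coeff_zero_eq_constantCoeff_apply, constantCoeff_shuffle]
    ring
  | succ n ih =>
    simp only [← coeff_hurwitzDeriv, hurwitzDeriv_shuffle, shuffle_add, map_add]
    rw [ih (hurwitzDeriv A), ih A (hurwitzDeriv B), ih A B]
    ring

theorem eq_C_of_hurwitzDeriv_eq_zero {B : K⟦X⟧} (h : hurwitzDeriv B = 0) :
    B = C (constantCoeff B) := by
  ext (_ | n)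
  · simp
  · simpa using congrArg (coeff n) h

theorem constantCoeff_shufflePow (A : K⟦X⟧) (m : ℕ) :
    constantCoeff (shufflePow A m) = constantCoeff A ^ m := by
  induction m with
  | zero => simp [shufflePow]
  | succ m ih => rw [shufflePow, constantCoeff_shuffle, ih, pow_succ, mul_comm]

theorem hurwitzDeriv_shufflePow_succ (A : K⟦X⟧) (m : ℕ) :
    hurwitzDeriv (shufflePow A (m + 1)) =
      ((m + 1 : ℕ) : K) • shuffle (hurwitzDeriv A) (shufflePow A m) := by
  induction m with
  | zero => simp [shufflePow, shuffle_one]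
  | succ m ih =>
    rw [shufflePow, hurwitzDeriv_shuffle, ih, shuffle_smul, shuffle_left_comm, ← shufflePow]
    push_cast
    module

end PowerSeries

theorem shufflePow_char_p {K : Type*} [CommRing K] (p : ℕ) [hp : Fact p.Prime] [CharP K p]
    (A : PowerSeries K) :
    shufflePow A p = PowerSeries.C ((constantCoeff A) ^ p) ∧
    (constantCoeff A = 1 → shufflePow A p = 1) := by
  obtain ⟨m, rfl⟩ : ∃ m, p = m + 1 := Nat.exists_eq_succ_of_ne_zero hp.out.ne_zero
  have hD : hurwitzDeriv (shufflePow A (m + 1)) = 0 := by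
    rw [hurwitzDeriv_shufflePow_succ, CharP.cast_eq_zero, zero_smul]
  have hC : shufflePow A (m + 1) = C (constantCoeff A ^ (m + 1)) := by
    rw [eq_C_of_hurwitzDeriv_eq_zero hD, constantCoeff_shufflePow]
  refine ⟨hC, fun h => ?_⟩
  rw [hC, h, one_pow, map_one]
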